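/- arXiv:1211.2251 — 4 statements merged into one kernel-verified Lean document; each statement's English description precedes it below -/
import Mathlib

section
/- For all natural numbers n, h, k, the number of independent k-subsets of the h-th power of a path on n vertices equals the binomial coefficient C(n - h*k + h, k). -/
/-!
Split the independent `k`-subsets of `{1, …, n + 1}` according to whether they contain `n + 1`.
Those that do not are the independent `k`-subsets of `{1, …, n}`; erasing `n + 1` from those that
do leaves exactly the independent `(k - 1)`-subsets of `{1, …, n - h}`. The binomial coefficients
`C(n + h - h k, k)` satisfy the same recurrence by Pascal's rule, and both sides agree for `n = 0`
and for `k = 0`.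
-/

open Finset

/-- The independent subsets of the h-th power of the path on vertices {1,...,n}:
subsets of {1,...,n} in which any two distinct elements differ by more than h. -/
def Indep (n h : ℕ) : Finset (Finset ℕ) :=
  (Finset.Icc 1 n).powerset.filter (fun S => ∀ a ∈ S, ∀ b ∈ S, a < b → h < b - a)

/-- The independent k-subsets. -/
def IndepK (n h k : ℕ) : Finset (Finset ℕ) :=
  (Indep n h).filter (fun S => S.card = k)

section IndepK

variable {n h k : ℕ} {S : Finset ℕ}

lemma mem_IndepK :
    S ∈ IndepK n h k ↔
      (∀ x ∈ S, 1 ≤ x ∧ x ≤ n) ∧ (∀ a ∈ S, ∀ b ∈ S, a < b → h < b - a) ∧ S.card = k := by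
  simp only [IndepK, Indep, mem_filter, mem_powerset, subset_iff, mem_Icc, and_assoc]

lemma IndepK_zero_right (n h : ℕ) : IndepK n h 0 = {∅} := by
  ext S
  simp only [mem_IndepK, card_eq_zero, mem_singleton]
  constructor
  · exact fun hS => hS.2.2
  · rintro rfl
    simp

lemma IndepK_zero_left (h k : ℕ) : IndepK 0 h (k + 1) = ∅ := by
  refine eq_empty_of_forall_notMem fun S hS => ?_
  obtain ⟨hrange, -, hcard⟩ := mem_IndepK.1 hS
  have hS_empty : S = ∅ := eq_empty_of_forall_notMem fun x hx => by
    have := hrange x hx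
    omega
  simp [hS_empty] at hcard

lemma filter_notMem_IndepK_succ :
    (IndepK (n + 1) h k).filter (n + 1 ∉ ·) = IndepK n h k := by
  ext S
  simp only [mem_filter, mem_IndepK]
  constructor
  · rintro ⟨⟨hrange, hgap, hcard⟩, hnS⟩
    refine ⟨fun x hx => ?_, hgap, hcard⟩
    have := hrange x hx
    have : x ≠ n + 1 := fun hx' => hnS (hx' ▸ hx)
    omega
  · rintro ⟨hrange, hgap, hcard⟩
    refine ⟨⟨fun x hx => ?_, hgap, hcard⟩, fun hnS => ?_⟩
    · have := hrange x hx
      omega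
    · have := hrange (n + 1) hnS
      omega

lemma succ_notMem_of_mem_IndepK_sub (hS : S ∈ IndepK (n - h) h k) : n + 1 ∉ S := fun hnS => by
  have := (mem_IndepK.1 hS).1 (n + 1) hnS
  omega

lemma insert_mem_IndepK_succ (hS : S ∈ IndepK (n - h) h k) :
    insert (n + 1) S ∈ IndepK (n + 1) h (k + 1) := by
  obtain ⟨hrange, hgap, hcard⟩ := mem_IndepK.1 hS
  have hbound : ∀ x ∈ S, 1 ≤ x ∧ x + h ≤ n := fun x hx => by
    have := hrange x hx
    omega
  refine mem_IndepK.2 ⟨fun x hx => ?_, fun a ha b hb hab => ?_, ?_⟩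
  · rcases mem_insert.1 hx with rfl | hx
    · omega
    · have := hbound x hx
      omega
  · rcases mem_insert.1 ha with rfl | ha <;> rcases mem_insert.1 hb with rfl | hb
    · omega
    · have := hbound b hb
      omega
    · have := hbound a ha
      omega
    · exact hgap a ha b hb hab
  · rw [card_insert_of_notMem (succ_notMem_of_mem_IndepK_sub hS), hcard]

lemma erase_mem_IndepK_sub (hS : S ∈ IndepK (n + 1) h (k + 1)) (hnS : n + 1 ∈ S) :
    S.erase (n + 1) ∈ IndepK (n - h) h k := by
  obtain ⟨hrange, hgap, hcard⟩ := mem_IndepK.1 hS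
  refine mem_IndepK.2 ⟨fun x hx => ?_, fun a ha b hb hab => ?_, ?_⟩
  · obtain ⟨hxn, hxS⟩ := mem_erase.1 hx
    have := hrange x hxS
    have := hgap x hxS (n + 1) hnS (by omega)
    omega
  · exact hgap a (mem_of_mem_erase ha) b (mem_of_mem_erase hb) hab
  · rw [card_erase_of_mem hnS, hcard, Nat.add_sub_cancel]

lemma card_filter_mem_IndepK_succ :
    ((IndepK (n + 1) h (k + 1)).filter (n + 1 ∈ ·)).card = (IndepK (n - h) h k).card := by
  refine card_nbij' (·.erase (n + 1)) (insert (n + 1)) ?_ ?_ ?_ ?_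
  · intro S hS
    obtain ⟨hS, hnS⟩ := mem_filter.1 hS
    exact erase_mem_IndepK_sub hS hnS
  · intro S hS
    exact mem_filter.2 ⟨insert_mem_IndepK_succ hS, mem_insert_self _ _⟩
  · intro S hS
    exact insert_erase (mem_filter.1 hS).2
  · intro S hS
    exact erase_insert (succ_notMem_of_mem_IndepK_sub hS)

lemma card_IndepK_succ_succ (n h k : ℕ) :
    (IndepK (n + 1) h (k + 1)).card = (IndepK n h (k + 1)).card + (IndepK (n - h) h k).card := by
  rw [← card_filter_add_card_filter_not (p := (n + 1 ∈ ·)), filter_notMem_IndepK_succ,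
    card_filter_mem_IndepK_succ, add_comm]

end IndepK

lemma choose_succ_add_sub_mul_succ (n h k : ℕ) :
    (n + 1 + h - h * (k + 1)).choose (k + 1) =
      (n + h - h * (k + 1)).choose (k + 1) + (n - h + h - h * k).choose k := by
  rcases k with _ | k
  · simp
  have hmul : h * (k + 1 + 1) = h * (k + 1) + h := by ring
  have hle_mul : h ≤ h * (k + 1) := Nat.le_mul_of_pos_right h k.succ_pos
  rw [hmul]
  rcases le_or_gt (h * (k + 1)) n with hle | hlt
  · have hfirst : n + 1 + h - (h * (k + 1) + h) = n - h * (k + 1) + 1 := by omega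
    have hsecond : n + h - (h * (k + 1) + h) = n - h * (k + 1) := by omega
    have hthird : n - h + h - h * (k + 1) = n - h * (k + 1) := by omega
    rw [hfirst, hsecond, hthird, Nat.choose_succ_succ', add_comm]
  · have hfirst : n + 1 + h - (h * (k + 1) + h) = 0 := by omega
    have hsecond : n + h - (h * (k + 1) + h) = 0 := by omega
    have hthird : n - h + h - h * (k + 1) = 0 := by omega
    simp [hfirst, hsecond, hthird]

theorem stmt0 (n h k : ℕ) :
    (IndepK n h k).card = Nat.choose (n + h - h * k) k := by
  induction n using Nat.strong_induction_on generalizing k with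
  | _ n ih =>
  match n, k with
  | n, 0 => simp [IndepK_zero_right]
  | 0, k + 1 =>
    rw [IndepK_zero_left, card_empty, zero_add,
      Nat.sub_eq_zero_of_le (Nat.le_mul_of_pos_right h k.succ_pos), Nat.choose_zero_succ]
  | n + 1, k + 1 =>
    rw [card_IndepK_succ_succ, ih n (by omega), ih (n - h) (by omega),
      choose_succ_add_sub_mul_succ]
end

section
/- There is a bijection between the independent k-subsets of the h-th power of a path on n vertices and the k-element subsets of a set with n - h*k + h elements (assuming n + h ≥ h*k). -/
/-!
List an independent set increasingly as `a 0 < a 1 < ⋯ < a (k-1)`. Consecutive elements differ by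
more than `h` exactly when `i ↦ a i - h * i` is strictly increasing, and shifting back by `h * i`
moves the bounds `1 ≤ a 0`, `a (k-1) ≤ n` to `1 ≤ b 0`, `b (k-1) ≤ n - h * (k-1)`. Since a
`k`-subset of a linear order is the same as its increasing enumeration `Fin k → ℕ`, the shift
`a ↦ a - h * i` is the bijection.
-/

open Finset

section SortedEnumeration

variable {α : Type*} [LinearOrder α] {k : ℕ}

lemma card_image_univ_of_strictMono {f : Fin k → α} (hf : StrictMono f) :
    #(univ.image f) = k := by
  rw [card_image_of_injective _ hf.injective, card_univ, Fintype.card_fin]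

def subtypeEquivStrictMono (A : Finset (Finset α)) (P : (Fin k → α) → Prop)
    (hA : ∀ s ∈ A, #s = k) (hP : ∀ f, StrictMono f → (univ.image f ∈ A ↔ P f)) :
    {s // s ∈ A} ≃ {f : Fin k → α // StrictMono f ∧ P f} where
  toFun s := ⟨s.1.orderEmbOfFin (hA _ s.2), (s.1.orderEmbOfFin _).strictMono, by
    rw [← hP _ (OrderEmbedding.strictMono _), image_orderEmbOfFin_univ]; exact s.2⟩
  invFun f := ⟨univ.image f.1, (hP f.1 f.2.1).2 f.2.2⟩
  left_inv s := Subtype.ext (image_orderEmbOfFin_univ _ _)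
  right_inv f := Subtype.ext (orderEmbOfFin_unique (card_image_univ_of_strictMono f.2.1)
    (fun i => mem_image_of_mem _ (mem_univ i)) f.2.1).symm

lemma image_univ_mem_powersetCard_iff {f : Fin k → α} (hf : StrictMono f) {s : Finset α} :
    univ.image f ∈ powersetCard k s ↔ ∀ i, f i ∈ s := by
  simp [mem_powersetCard, card_image_univ_of_strictMono hf, subset_iff]

end SortedEnumeration

lemma image_univ_mem_IndepK_iff {n h k : ℕ} {f : Fin k → ℕ} (hf : StrictMono f) :
    univ.image f ∈ IndepK n h k ↔ (∀ i, f i ∈ Icc 1 n) ∧ ∀ i j, i < j → f i + h < f j := by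
  simp only [IndepK, Indep, mem_filter, mem_powerset, card_image_univ_of_strictMono hf, and_true,
    subset_iff, mem_image, mem_univ, true_and, forall_exists_index, forall_apply_eq_imp_iff,
    hf.lt_iff_lt]
  refine and_congr_right fun _ => forall₂_congr fun i j => imp_congr_right fun hij => ?_
  have := hf hij
  omega

lemma strictMono_iff_forall_add_lt {R : Type*} [Semiring R] [LinearOrder R]
    [IsStrictOrderedRing R] {k : ℕ} {f g : Fin k → R} {h : R} (hh : 0 ≤ h)
    (hfg : ∀ i, f i = g i + h * (i : ℕ)) :
    StrictMono g ↔ ∀ i j, i < j → f i + h < f j := by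
  constructor
  · intro hg i j hij
    have : h * ((i : ℕ) + 1 : ℕ) ≤ h * (j : ℕ) :=
      mul_le_mul_of_nonneg_left (Nat.cast_le.2 hij) hh
    rw [hfg, hfg, add_assoc, ← mul_add_one]
    exact add_lt_add_of_lt_of_le (hg hij) (by exact_mod_cast this)
  · intro hgap
    rcases k with _ | k
    · exact fun i => i.elim0
    refine Fin.strictMono_iff_lt_succ.2 fun i => ?_
    have := hgap _ _ (Fin.castSucc_lt_succ (i := i))
    rwa [hfg, hfg, Fin.val_castSucc, Fin.val_succ, Nat.cast_add_one, mul_add_one, ← add_assoc,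
      add_lt_add_iff_right, add_lt_add_iff_right] at this

lemma add_mul_le_add_mul_of_forall_add_lt {k h : ℕ} {f : Fin k → ℕ}
    (hgap : ∀ i j, i < j → f i + h < f j) {i j : Fin k} (hij : i ≤ j) :
    f i + h * j ≤ f j + h * i := by
  -- `f i - h * i` is taken in `ℤ`, where it is increasing without any truncation.
  have hmono : StrictMono fun i : Fin k => (f i : ℤ) - h * (i : ℕ) :=
    (strictMono_iff_forall_add_lt (f := fun i => (f i : ℤ)) (Nat.cast_nonneg h)
      (fun i => by ring)).2 fun i j hij => by exact_mod_cast hgap i j hij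
  have := hmono.monotone hij
  zify
  linarith

lemma mul_lt_and_sub_mul_le_of_forall_add_lt {n h k : ℕ} {f : Fin k → ℕ}
    (hbox : ∀ i, f i ∈ Icc 1 n) (hgap : ∀ i j, i < j → f i + h < f j) (i : Fin k) :
    h * i < f i ∧ f i - h * i ≤ n + h - h * k := by
  have hk : 0 < k := i.pos
  have hfirst := add_mul_le_add_mul_of_forall_add_lt hgap
    (show (⟨0, hk⟩ : Fin k) ≤ i from Nat.zero_le _)
  have hlast := add_mul_le_add_mul_of_forall_add_lt hgap
    (show i ≤ ⟨k - 1, by omega⟩ from Nat.le_sub_one_of_lt i.isLt)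
  have := hbox ⟨0, hk⟩
  have := hbox ⟨k - 1, by omega⟩
  have : h * (k - 1) + h = h * k := by rw [← mul_add_one, Nat.sub_one_add_one hk.ne']
  simp only [mem_Icc, mul_zero] at *
  omega

def spreadEquiv (n h k : ℕ) :
    {g : Fin k → ℕ // StrictMono g ∧ ∀ i, g i ∈ Icc 1 (n + h - h * k)} ≃
      {f : Fin k → ℕ // StrictMono f ∧ (∀ i, f i ∈ Icc 1 n) ∧ ∀ i j, i < j → f i + h < f j} where
  toFun g := ⟨fun i => g.1 i + h * i, by
    have hgap := (strictMono_iff_forall_add_lt (Nat.zero_le h) fun _ => rfl).1 g.2.1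
    refine ⟨fun i j hij => (Nat.le_add_right _ _).trans_lt (hgap i j hij), fun i => ?_, hgap⟩
    have := g.2.2 i
    have : h * (i : ℕ) + h ≤ h * k := by rw [← mul_add_one]; exact Nat.mul_le_mul_left h i.isLt
    simp only [mem_Icc] at *
    omega⟩
  invFun f := ⟨fun i => f.1 i - h * i, by
    have hbounds := mul_lt_and_sub_mul_le_of_forall_add_lt f.2.2.1 f.2.2.2
    refine ⟨(strictMono_iff_forall_add_lt (Nat.zero_le h)
      fun i => (Nat.sub_add_cancel (hbounds i).1.le).symm).2 f.2.2.2, fun i => ?_⟩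
    have := hbounds i
    simp only [mem_Icc]
    omega⟩
  left_inv g := Subtype.ext <| funext fun i => Nat.add_sub_cancel _ _
  right_inv f := Subtype.ext <| funext fun i =>
    Nat.sub_add_cancel (mul_lt_and_sub_mul_le_of_forall_add_lt f.2.2.1 f.2.2.2 i).1.le

theorem stmt1_general (n h k : ℕ) :
    Nonempty ({S // S ∈ IndepK n h k} ≃
      {T // T ∈ Finset.powersetCard k (Finset.Icc 1 (n + h - h * k))}) :=
  ⟨(subtypeEquivStrictMono _ _ (fun _ hS => (mem_filter.1 hS).2)
      fun _ hf => image_univ_mem_IndepK_iff hf).trans <|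
    (spreadEquiv n h k).symm.trans
      (subtypeEquivStrictMono _ _ (fun _ hT => (mem_powersetCard.1 hT).2)
        fun _ hf => image_univ_mem_powersetCard_iff hf).symm⟩

theorem stmt1 (n h k : ℕ) (hk : h * k ≤ n + h) :
    Nonempty ({S // S ∈ IndepK n h k} ≃
      {T // T ∈ Finset.powersetCard k (Finset.Icc 1 (n + h - h * k))}) :=
  stmt1_general n h k
end

section
/- Fix n, h, k and 1 ≤ i ≤ n. The number of independent k-subsets of P_n^(h) containing the vertex i equals Σ_{r=0}^{k-1} p̄(i-h-1, r) · p̄(n-i-h, k-1-r), where p̄(m, j) denotes the number of independent j-subsets of P_m^(h) when m ≥ 0, and p̄(m, j) = p̄(0, j) (which is 1 if j = 0 and 0 otherwise) when m < 0. -/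
open Finset

/-!
An independent set `S ∋ i` has no element in `[i - h, i + h]` other than `i`, so it
is the disjoint union of its part `A` below `i - h`, `{i}`, and its part above `i + h`, which is
`B + (i + h)` for an independent subset `B` of `{1, ..., n - i - h}`. Conversely every such
`A ∪ {i} ∪ (B + (i + h))` is independent, and `#S = #A + 1 + #B`; summing over `r = #A` gives the
formula. Truncated subtraction turns a negative size `m` into `0`, which is the paper's
convention `p̄(m, j) = p̄(0, j)`.
-/

def Separated (h : ℕ) (S : Finset ℕ) : Prop :=
  ∀ a ∈ S, ∀ b ∈ S, a < b → h < b - a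

section Separated

variable {h c : ℕ} {S T : Finset ℕ}

lemma mem_indep {n : ℕ} : S ∈ Indep n h ↔ S ⊆ Icc 1 n ∧ Separated h S := by
  simp [Indep, Separated]

lemma mem_indepK {n k : ℕ} : S ∈ IndepK n h k ↔ S ∈ Indep n h ∧ #S = k :=
  mem_filter

lemma Separated.subset (hT : Separated h T) (hST : S ⊆ T) : Separated h S :=
  fun a ha b hb => hT a (hST ha) b (hST hb)

lemma Separated.add_lt_or_add_lt (hS : Separated h S) {a b : ℕ} (ha : a ∈ S) (hb : b ∈ S)
    (hab : a ≠ b) : a + h < b ∨ b + h < a := by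
  rcases Nat.lt_or_gt_of_ne hab with hab | hab
  · have := hS a ha b hb hab; omega
  · have := hS b hb a ha hab; omega

lemma Separated.union (hS : Separated h S) (hT : Separated h T)
    (hST : ∀ a ∈ S, ∀ b ∈ T, a + h < b) : Separated h (S ∪ T) := by
  intro a ha b hb hab
  rcases mem_union.1 ha with ha | ha <;> rcases mem_union.1 hb with hb | hb
  · exact hS a ha b hb hab
  · have := hST a ha b hb; omega
  · have := hST b hb a ha; omega
  · exact hT a ha b hb hab

lemma separated_singleton (a : ℕ) : Separated h {a} := by
  intro x hx y hy hxy
  simp only [mem_singleton] at hx hy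
  omega

lemma Separated.image_add (hS : Separated h S) : Separated h (S.image (· + c)) := by
  simp only [Separated, mem_image]
  rintro _ ⟨a, ha, rfl⟩ _ ⟨b, hb, rfl⟩ hab
  have := hS a ha b hb (by omega)
  omega

lemma Separated.image_sub (hS : Separated h S) (hc : ∀ x ∈ S, c ≤ x) :
    Separated h (S.image (· - c)) := by
  simp only [Separated, mem_image]
  rintro _ ⟨a, ha, rfl⟩ _ ⟨b, hb, rfl⟩ hab
  have := hc a ha
  have := hc b hb
  have := hS a ha b hb (by omega)
  omega

end Separated

def glue (i h : ℕ) (A B : Finset ℕ) : Finset ℕ :=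
  A ∪ insert i (B.image (· + (i + h)))

def lowerPart (i h : ℕ) (S : Finset ℕ) : Finset ℕ :=
  S.filter (· + h < i)

def upperPart (i h : ℕ) (S : Finset ℕ) : Finset ℕ :=
  (S.filter (i + h < ·)).image (· - (i + h))

section Glue

variable {n m h i : ℕ} {S A B : Finset ℕ}

lemma add_lt_of_mem_indep (hA : A ∈ Indep (i - h - 1) h) {a : ℕ} (ha : a ∈ A) : a + h < i := by
  have := mem_Icc.1 ((mem_indep.1 hA).1 ha)
  omega

lemma one_le_of_mem_indep (hB : B ∈ Indep m h) {b : ℕ} (hb : b ∈ B) : 1 ≤ b :=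
  (mem_Icc.1 ((mem_indep.1 hB).1 hb)).1

lemma mem_glue_self : i ∈ glue i h A B :=
  mem_union_right _ (mem_insert_self _ _)

lemma lowerPart_mem_indep (hS : S ∈ Indep n h) : lowerPart i h S ∈ Indep (i - h - 1) h := by
  obtain ⟨hSn, hSsep⟩ := mem_indep.1 hS
  refine mem_indep.2 ⟨fun x hx => ?_, hSsep.subset (filter_subset _ _)⟩
  obtain ⟨hxS, hxi⟩ := mem_filter.1 hx
  have := mem_Icc.1 (hSn hxS)
  exact mem_Icc.2 (by omega)

lemma upperPart_mem_indep (hS : S ∈ Indep n h) : upperPart i h S ∈ Indep (n - i - h) h := by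
  obtain ⟨hSn, hSsep⟩ := mem_indep.1 hS
  refine mem_indep.2 ⟨fun x hx => ?_,
    (hSsep.subset (filter_subset _ _)).image_sub fun x hx => (mem_filter.1 hx).2.le⟩
  obtain ⟨y, hy, rfl⟩ := mem_image.1 hx
  obtain ⟨hyS, hiy⟩ := mem_filter.1 hy
  have := mem_Icc.1 (hSn hyS)
  exact mem_Icc.2 (by omega)

lemma glue_mem_indep (hi1 : 1 ≤ i) (hin : i ≤ n) (hA : A ∈ Indep (i - h - 1) h)
    (hB : B ∈ Indep (n - i - h) h) : glue i h A B ∈ Indep n h := by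
  obtain ⟨hBn, hBsep⟩ := mem_indep.1 hB
  refine mem_indep.2 ⟨fun x hx => ?_, ?_⟩
  · simp only [glue, mem_union, mem_insert, mem_image] at hx
    rcases hx with hx | rfl | ⟨b, hb, rfl⟩
    · have := mem_Icc.1 ((mem_indep.1 hA).1 hx)
      exact mem_Icc.2 (by omega)
    · exact mem_Icc.2 ⟨hi1, hin⟩
    · have := mem_Icc.1 (hBn hb)
      exact mem_Icc.2 (by omega)
  · have hupper : Separated h (insert i (B.image (· + (i + h)))) := by
      refine (separated_singleton i).union hBsep.image_add fun a ha b hb => ?_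
      obtain ⟨b', hb', rfl⟩ := mem_image.1 hb
      have := one_le_of_mem_indep hB hb'
      rw [mem_singleton.1 ha]
      omega
    refine (mem_indep.1 hA).2.union hupper fun a ha x hx => ?_
    have := add_lt_of_mem_indep hA ha
    simp only [mem_insert, mem_image] at hx
    rcases hx with rfl | ⟨b, hb, rfl⟩ <;> omega

lemma card_glue (hA : A ∈ Indep (i - h - 1) h) (hB : B ∈ Indep m h) :
    #(glue i h A B) = #A + 1 + #B := by
  have hi : i ∉ B.image (· + (i + h)) := by
    simp only [mem_image, not_exists, not_and]
    intro b hb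
    have := one_le_of_mem_indep hB hb
    omega
  have hdisj : Disjoint A (insert i (B.image (· + (i + h)))) := by
    refine disjoint_left.2 fun a ha hx => ?_
    have := add_lt_of_mem_indep hA ha
    simp only [mem_insert, mem_image] at hx
    rcases hx with rfl | ⟨b, hb, rfl⟩ <;> omega
  rw [glue, card_union_of_disjoint hdisj, card_insert_of_notMem hi,
    card_image_of_injective _ (add_left_injective _)]
  ring

lemma lowerPart_glue (hA : A ∈ Indep (i - h - 1) h) : lowerPart i h (glue i h A B) = A := by
  ext x
  simp only [lowerPart, glue, mem_filter, mem_union, mem_insert, mem_image]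
  constructor
  · rintro ⟨hx | rfl | ⟨b, hb, rfl⟩, hxi⟩
    · exact hx
    all_goals omega
  · exact fun hx => ⟨Or.inl hx, add_lt_of_mem_indep hA hx⟩

lemma upperPart_glue (hA : A ∈ Indep (i - h - 1) h) (hB : B ∈ Indep m h) :
    upperPart i h (glue i h A B) = B := by
  have hfilter : (glue i h A B).filter (i + h < ·) = B.image (· + (i + h)) := by
    ext x
    simp only [glue, mem_filter, mem_union, mem_insert, mem_image]
    constructor
    · rintro ⟨hx | rfl | hx, hix⟩
      · have := add_lt_of_mem_indep hA hx; omega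
      · omega
      · exact hx
    · rintro ⟨b, hb, rfl⟩
      have := one_le_of_mem_indep hB hb
      exact ⟨Or.inr (Or.inr ⟨b, hb, rfl⟩), by omega⟩
  rw [upperPart, hfilter, image_image]
  simp only [Function.comp_def, add_tsub_cancel_right, image_id']

lemma glue_lowerPart_upperPart (hS : Separated h S) (hi : i ∈ S) :
    glue i h (lowerPart i h S) (upperPart i h S) = S := by
  have hshift : (upperPart i h S).image (· + (i + h)) = S.filter (i + h < ·) := by
    rw [upperPart, image_image]
    conv_rhs => rw [← image_id (s := S.filter (i + h < ·))]
    exact image_congr fun x hx => Nat.sub_add_cancel (mem_filter.1 hx).2.le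
  ext x
  rw [glue, hshift]
  simp only [lowerPart, mem_union, mem_insert, mem_filter]
  constructor
  · rintro (⟨hx, -⟩ | rfl | ⟨hx, -⟩) <;> assumption
  · intro hx
    by_cases hxi : x = i
    · exact Or.inr (Or.inl hxi)
    · rcases hS.add_lt_or_add_lt hx hi hxi with hlt | hlt
      · exact Or.inl ⟨hx, hlt⟩
      · exact Or.inr (Or.inr ⟨hx, hlt⟩)

lemma card_eq_card_lowerPart_add_card_upperPart (hS : S ∈ Indep n h) (hi : i ∈ S) :
    #S = #(lowerPart i h S) + 1 + #(upperPart i h S) := by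
  conv_lhs => rw [← glue_lowerPart_upperPart (mem_indep.1 hS).2 hi]
  exact card_glue (lowerPart_mem_indep hS) (upperPart_mem_indep hS)

end Glue

theorem stmt8 (n h k i : ℕ) (hi1 : 1 ≤ i) (hin : i ≤ n) :
    ((IndepK n h k).filter (fun S => i ∈ S)).card =
      ∑ r ∈ Finset.range k,
        (IndepK (i - h - 1) h r).card * (IndepK (n - i - h) h (k - 1 - r)).card := by
  simp_rw [← card_product]
  rw [← card_sigma]
  refine card_nbij' (fun S => ⟨#(lowerPart i h S), lowerPart i h S, upperPart i h S⟩)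
    (fun p => glue i h p.2.1 p.2.2) ?_ ?_ ?_ ?_
  all_goals simp only [Set.MapsTo, Set.LeftInvOn, Set.RightInvOn, Sigma.forall, Prod.forall,
    mem_coe, mem_filter, mem_sigma, mem_range, mem_product, mem_indepK, and_true]
  · rintro S ⟨⟨hS, rfl⟩, hi⟩
    have hcard := card_eq_card_lowerPart_add_card_upperPart hS hi
    exact ⟨by omega, lowerPart_mem_indep hS, upperPart_mem_indep hS, by omega⟩
  · rintro r A B ⟨hr, ⟨hA, hAcard⟩, hB, hBcard⟩
    refine ⟨⟨glue_mem_indep hi1 hin hA hB, ?_⟩, mem_glue_self⟩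
    rw [card_glue hA hB]
    omega
  · rintro S ⟨⟨hS, -⟩, hi⟩
    exact glue_lowerPart_upperPart (mem_indep.1 hS).2 hi
  · rintro r A B ⟨-, ⟨hA, rfl⟩, hB, -⟩
    rw [lowerPart_glue hA, upperPart_glue hA hB]
end

section
/- Let H(n,h) be the number of covering pairs in the poset of independent subsets of P_n^(h) ordered by inclusion, and let F^(h) be the h-Fibonacci sequence defined by F^(h)_m = 1 for 1 ≤ m ≤ h+1 and F^(h)_m = F^(h)_{m-1} + F^(h)_{m-h-1} for m > h+1. Then for all n, h ≥ 0: H(n,h) = Σ_{i=1}^{n} F^(h)_i · F^(h)_{n-i+1}, i.e., H(n,h) is the n-th term of the convolution of F^(h) with itself. -/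
/-! Every independent set `S` covers exactly `|S|` independent sets, namely `S` minus one point,
so `H(n,h) = ∑_S |S| = ∑_i #{S | i ∈ S}`. An independent set through `i` is `i` together with
independent sets in `[1, i-h-1]` and in `[i+h+1, n]`, and splitting on the top element shows that
an interval of length `L` carries `F_{L+h+1}` independent sets; hence `#{S | i ∈ S} = F_i F_{n-i+1}`. -/

open Finset

/-- The number of covering pairs (S,T): T ⊆ S, |S| = |T| + 1, both independent. -/
def coverCount (n h : ℕ) : ℕ :=
  ((Indep n h ×ˢ Indep n h).filter
    (fun p => p.2 ⊆ p.1 ∧ p.1.card = p.2.card + 1)).card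

/-- The h-Fibonacci sequence: 1 for n ≤ h+1, then F_n = F_{n-1} + F_{n-h-1}. -/
def hFib (h : ℕ) (n : ℕ) : ℕ :=
  if hn : n ≤ h + 1 then 1 else hFib h (n - 1) + hFib h (n - h - 1)
termination_by n
decreasing_by all_goals omega

section CoveringPairs

variable {α : Type*} [DecidableEq α]

theorem Finset.covBy_iff_subset_and_card_eq {s t : Finset α} :
    t ⋖ s ↔ t ⊆ s ∧ #s = #t + 1 := by
  rw [covBy_iff_card_sdiff_eq_one]
  refine and_congr_right fun hts => ?_
  have := card_le_card hts
  rw [card_sdiff_of_subset hts]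
  omega

open scoped Classical in
theorem Finset.card_filter_covBy_of_isLowerSet {𝒜 : Finset (Finset α)}
    (h𝒜 : IsLowerSet (𝒜 : Set (Finset α))) {s : Finset α} (hs : s ∈ 𝒜) :
    #{t ∈ 𝒜 | t ⋖ s} = #s := by
  have : {t ∈ 𝒜 | t ⋖ s} = s.image s.erase := by
    ext t
    simp only [mem_filter, mem_image, ← covBy_iff_exists_erase, and_iff_right_iff_imp]
    intro hts
    exact h𝒜 hts.le hs
  rw [this, card_image_of_injOn (erase_injOn s)]

open scoped Classical in
theorem Finset.card_filter_covBy_product_of_isLowerSet {𝒜 : Finset (Finset α)}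
    (h𝒜 : IsLowerSet (𝒜 : Set (Finset α))) :
    #{p ∈ 𝒜 ×ˢ 𝒜 | p.2 ⋖ p.1} = ∑ s ∈ 𝒜, #s := by
  rw [card_filter, sum_product]
  refine sum_congr rfl fun s hs => ?_
  rw [← card_filter, card_filter_covBy_of_isLowerSet h𝒜 hs]

theorem Finset.sum_card_eq_sum_card_filter_mem {𝒜 : Finset (Finset α)} {s : Finset α}
    (h𝒜 : ∀ t ∈ 𝒜, t ⊆ s) : ∑ t ∈ 𝒜, #t = ∑ a ∈ s, #{t ∈ 𝒜 | a ∈ t} :=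
  calc ∑ t ∈ 𝒜, #t = ∑ t ∈ 𝒜, #(s ∩ t) :=
        sum_congr rfl fun t ht => by rw [inter_eq_right.2 (h𝒜 t ht)]
    _ = ∑ a ∈ s, #{t ∈ 𝒜 | a ∈ t} := by
        simp_rw [← filter_mem_eq_inter, card_eq_sum_ones, sum_filter]
        exact sum_comm

end CoveringPairs

def IsSeparated (h : ℕ) (S : Finset ℕ) : Prop :=
  ∀ a ∈ S, ∀ b ∈ S, a < b → h < b - a

instance (h : ℕ) : DecidablePred (IsSeparated h) := fun S => by
  unfold IsSeparated; infer_instance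

def separatedSubsets (h : ℕ) (s : Finset ℕ) : Finset (Finset ℕ) :=
  s.powerset.filter (IsSeparated h)

section Separated

variable {h i : ℕ} {s S A B : Finset ℕ}

theorem mem_separatedSubsets : S ∈ separatedSubsets h s ↔ S ⊆ s ∧ IsSeparated h S := by
  rw [separatedSubsets, mem_filter, mem_powerset]

theorem IsSeparated.mono (hS : IsSeparated h S) (hAS : A ⊆ S) : IsSeparated h A :=
  fun a ha b hb => hS a (hAS ha) b (hAS hb)

theorem IsSeparated.insert_union (hA : IsSeparated h A) (hB : IsSeparated h B)
    (hAi : ∀ a ∈ A, a + h < i) (hBi : ∀ b ∈ B, i + h < b) :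
    IsSeparated h (insert i (A ∪ B)) := by
  intro a ha b hb hab
  rw [mem_insert, mem_union] at ha hb
  rcases ha with rfl | ha | ha <;> rcases hb with rfl | hb | hb
  · omega
  · have := hAi b hb; omega
  · have := hBi b hb; omega
  · have := hAi a ha; omega
  · exact hA a ha b hb hab
  · have := hAi a ha; have := hBi b hb; omega
  · have := hBi a ha; omega
  · have := hBi a ha; have := hAi b hb; omega
  · exact hB a ha b hb hab

theorem isLowerSet_separatedSubsets (h : ℕ) (s : Finset ℕ) :
    IsLowerSet (separatedSubsets h s : Set (Finset ℕ)) := by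
  intro S A hAS hS
  rw [mem_coe, mem_separatedSubsets] at hS ⊢
  exact ⟨hAS.trans hS.1, hS.2.mono hAS⟩

theorem filter_notMem_separatedSubsets :
    {S ∈ separatedSubsets h s | i ∉ S} = separatedSubsets h (s.erase i) := by
  ext S
  simp only [mem_filter, mem_separatedSubsets, subset_erase]
  tauto

theorem card_filter_mem_separatedSubsets (hi : i ∈ s) :
    #{S ∈ separatedSubsets h s | i ∈ S} =
      #(separatedSubsets h {x ∈ s | x + h < i}) * #(separatedSubsets h {x ∈ s | i + h < x}) := by
  rw [← card_product]
  refine card_nbij' (fun S => ({x ∈ S | x < i}, {x ∈ S | i < x})) (fun p => insert i (p.1 ∪ p.2))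
    ?_ ?_ ?_ ?_
  · intro S hS
    rw [mem_coe, mem_filter, mem_separatedSubsets] at hS
    obtain ⟨⟨hSs, hS⟩, hiS⟩ := hS
    simp only [mem_coe, mem_product, mem_separatedSubsets]
    refine ⟨⟨fun x hx => ?_, hS.mono (filter_subset _ _)⟩,
      ⟨fun x hx => ?_, hS.mono (filter_subset _ _)⟩⟩ <;> rw [mem_filter] at hx ⊢
    · have := hS x hx.1 i hiS hx.2
      exact ⟨hSs hx.1, by omega⟩
    · have := hS i hiS x hx.1 hx.2
      exact ⟨hSs hx.1, by omega⟩
  · rintro ⟨A, B⟩ hAB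
    simp only [mem_coe, mem_product, mem_separatedSubsets, subset_iff, mem_filter] at hAB
    obtain ⟨⟨hAs, hA⟩, hBs, hB⟩ := hAB
    simp only [mem_coe, mem_filter, mem_separatedSubsets]
    refine ⟨⟨insert_subset hi (union_subset (fun x hx => (hAs hx).1) fun x hx => (hBs hx).1),
      hA.insert_union hB (fun a ha => (hAs ha).2) fun b hb => (hBs hb).2⟩, mem_insert_self _ _⟩
  · intro S hS
    have hiS := (mem_filter.1 hS).2
    ext x
    simp only [mem_insert, mem_union, mem_filter]
    grind
  · rintro ⟨A, B⟩ hAB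
    simp only [mem_coe, mem_product, mem_separatedSubsets, subset_iff, mem_filter] at hAB
    obtain ⟨⟨hAs, -⟩, hBs, -⟩ := hAB
    ext x <;> simp only [mem_insert, mem_union, mem_filter] <;> grind

theorem separatedSubsets_empty (h : ℕ) : separatedSubsets h ∅ = {∅} := rfl

theorem card_separatedSubsets_of_mem (hi : i ∈ s) :
    #(separatedSubsets h s) = #(separatedSubsets h (s.erase i)) +
      #(separatedSubsets h {x ∈ s | x + h < i}) * #(separatedSubsets h {x ∈ s | i + h < x}) := by
  rw [← card_filter_mem_separatedSubsets hi, ← filter_notMem_separatedSubsets, add_comm,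
    card_filter_add_card_filter_not]

end Separated

section hFib

variable {h : ℕ}

theorem hFib_of_le {m : ℕ} (hm : m ≤ h + 1) : hFib h m = 1 := by
  rw [hFib, dif_pos hm]

theorem hFib_add_two (m : ℕ) : hFib h (m + h + 2) = hFib h (m + h + 1) + hFib h (m + 1) := by
  rw [hFib, dif_neg (by omega), show m + h + 2 - 1 = m + h + 1 by omega,
    show m + h + 2 - h - 1 = m + 1 by omega]

theorem hFib_tsub_add_succ (m : ℕ) : hFib h (m - h + h + 1) = hFib h (m + 1) := by
  rcases le_or_gt m h with hm | hm
  · rw [hFib_of_le (by omega), hFib_of_le (by omega)]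
  · congr 1; omega

end hFib

theorem card_separatedSubsets_Ico (h a L : ℕ) :
    #(separatedSubsets h (Ico a (a + L))) = hFib h (L + h + 1) := by
  induction L using Nat.strong_induction_on with
  | _ L ih =>
    rcases L with _ | L
    · rw [add_zero, Ico_self, separatedSubsets_empty, card_singleton, hFib_of_le (by omega)]
    have hlast : a + L ∈ Ico a (a + (L + 1)) := by simp
    have herase : (Ico a (a + (L + 1))).erase (a + L) = Ico a (a + L) := by
      ext x; simp only [mem_erase, mem_Ico]; omega
    have hleft : {x ∈ Ico a (a + (L + 1)) | x + h < a + L} = Ico a (a + (L - h)) := by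
      ext x; simp only [mem_filter, mem_Ico]; omega
    have hright : {x ∈ Ico a (a + (L + 1)) | a + L + h < x} = ∅ := by
      ext x; simp only [mem_filter, mem_Ico, notMem_empty, iff_false]; omega
    rw [card_separatedSubsets_of_mem hlast, herase, hleft, hright, ih L (by omega),
      ih (L - h) (by omega), separatedSubsets_empty, card_singleton, mul_one, hFib_tsub_add_succ,
      show L + 1 + h + 1 = L + h + 2 by omega, hFib_add_two]

theorem indep_eq_separatedSubsets (n h : ℕ) : Indep n h = separatedSubsets h (Icc 1 n) := rfl

open scoped Classical in
theorem coverCount_eq_card_filter_covBy (n h : ℕ) :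
    coverCount n h = #{p ∈ Indep n h ×ˢ Indep n h | p.2 ⋖ p.1} :=
  congrArg card <| filter_congr fun _ _ => covBy_iff_subset_and_card_eq.symm

theorem card_filter_mem_separatedSubsets_Icc {n h i : ℕ} (hi : i ∈ Icc 1 n) :
    #{S ∈ separatedSubsets h (Icc 1 n) | i ∈ S} = hFib h i * hFib h (n - i + 1) := by
  have hleft : {x ∈ Icc 1 n | x + h < i} = Ico 1 (1 + (i - 1 - h)) := by
    ext x; simp only [mem_filter, mem_Icc, mem_Ico] at hi ⊢; omega
  have hright : {x ∈ Icc 1 n | i + h < x} = Ico (i + h + 1) (i + h + 1 + (n - i - h)) := by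
    ext x; simp only [mem_filter, mem_Icc, mem_Ico] at hi ⊢; omega
  rw [card_filter_mem_separatedSubsets hi, hleft, hright,
    card_separatedSubsets_Ico, card_separatedSubsets_Ico, hFib_tsub_add_succ, hFib_tsub_add_succ,
    Nat.sub_add_cancel (mem_Icc.1 hi).1]

theorem stmt12 (n h : ℕ) :
    coverCount n h = ∑ i ∈ Finset.Icc 1 n, hFib h i * hFib h (n - i + 1) := by
  rw [coverCount_eq_card_filter_covBy, indep_eq_separatedSubsets,
    card_filter_covBy_product_of_isLowerSet (isLowerSet_separatedSubsets h _),
    sum_card_eq_sum_card_filter_mem fun S hS => (mem_separatedSubsets.1 hS).1]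
  exact sum_congr rfl fun i hi => card_filter_mem_separatedSubsets_Icc hi
end
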